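/- Let J be a measurable range function and W ⊆ L²(Ω, H) the closed subspace corresponding to J. If R₁ and R₂ are measurable range operators on J and U : W → L²(Ω, H) is a bounded linear operator satisfying, for every φ ∈ W, both (Uφ)(ω) = R₁(ω)(φ(ω)) a.e. and (Uφ)(ω) = R₂(ω)(φ(ω)) a.e., then R₁(ω)a = R₂(ω)a for all a ∈ J(ω), for a.e. ω ∈ Ω. (Uniqueness of the range operator in Theorem 2.2.) -/

import Mathlib

open MeasureTheory
open scoped ENNReal NNReal

/-- The orthogonal projection of `H` onto a closed subspace `K`, as a map `H →L[ℂ] H`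
(junk `0` if `K` is not closed). -/
noncomputable def projCLM {H : Type*} [NormedAddCommGroup H] [InnerProductSpace ℂ H]
    [CompleteSpace H] (K : Submodule ℂ H) : H →L[ℂ] H :=
  haveI := Classical.dec (IsClosed (K : Set H))
  if h : IsClosed (K : Set H) then
    haveI : CompleteSpace K := h.completeSpace_coe
    K.subtypeL.comp (K.orthogonalProjectionOnto)
  else 0

/-- The subspace `W = {φ ∈ L²(Ω, H) : φ(ω) ∈ J(ω) for a.e. ω}` corresponding to a
range function `J`. -/
noncomputable def rangeSubmodule {Ω H : Type*} [MeasurableSpace Ω] (μ : Measure Ω)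
    [NormedAddCommGroup H] [InnerProductSpace ℂ H]
    (J : Ω → Submodule ℂ H) : Submodule ℂ (Lp H 2 μ) where
  carrier := {φ | ∀ᵐ ω ∂μ, (φ : Ω → H) ω ∈ J ω}
  add_mem' := by
    intro φ ψ hφ hψ
    simp only [Set.mem_setOf_eq] at *
    filter_upwards [Lp.coeFn_add φ ψ, hφ, hψ] with ω h1 h2 h3
    rw [h1]; exact (J ω).add_mem h2 h3
  zero_mem' := by
    simp only [Set.mem_setOf_eq]
    filter_upwards [Lp.coeFn_zero H 2 μ] with ω h
    rw [h]; exact (J ω).zero_mem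
  smul_mem' := by
    intro c φ hφ
    simp only [Set.mem_setOf_eq] at *
    filter_upwards [Lp.coeFn_smul c φ, hφ] with ω h1 h2
    rw [h1]; exact (J ω).smul_mem c h2


/-- A function into a separable metric space whose distances to every point are
measurable is strongly measurable (Pettis-type argument). -/
lemma stronglyMeasurable_of_measurable_dist {Ω H : Type*} [MeasurableSpace Ω] [MetricSpace H]
    [TopologicalSpace.SeparableSpace H] [Nonempty H] {f : Ω → H}
    (hd : ∀ c : H, Measurable fun ω => dist (f ω) c) : MeasureTheory.StronglyMeasurable f := by
  borelize H
  haveI : SecondCountableTopology H := UniformSpace.secondCountable_of_separable H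
  refine Measurable.stronglyMeasurable ?_
  refine measurable_of_isClosed fun s hs => ?_
  rcases s.eq_empty_or_nonempty with rfl | hne
  · simp
  obtain ⟨u, hu⟩ := TopologicalSpace.exists_dense_seq H
  have key : f ⁻¹' s = ⋂ (k : ℕ), ⋃ (n : ℕ) (_ : Metric.infDist (u n) s < 1/(k+1)),
      {ω | dist (f ω) (u n) < 1/(k+1)} := by
    ext ω
    simp only [Set.mem_preimage, Set.mem_iInter, Set.mem_iUnion, Set.mem_setOf_eq, exists_prop]
    constructor
    · intro h k
      have hk : (0:ℝ) < 1/(k+1) := by positivity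
      obtain ⟨n, hn⟩ := hu.exists_dist_lt (f ω) hk
      refine ⟨n, ?_, hn⟩
      calc Metric.infDist (u n) s ≤ dist (u n) (f ω) := Metric.infDist_le_dist_of_mem h
        _ < 1/(k+1) := by rwa [dist_comm]
    · intro h
      rw [← hs.closure_eq, Metric.mem_closure_iff]
      intro ε hε
      obtain ⟨k, hk⟩ := exists_nat_one_div_lt (half_pos hε)
      obtain ⟨n, hn1, hn2⟩ := h k
      obtain ⟨y, hy, hy2⟩ := (Metric.infDist_lt_iff hne).mp hn1
      refine ⟨y, hy, ?_⟩
      calc dist (f ω) y ≤ dist (f ω) (u n) + dist (u n) y := dist_triangle _ _ _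
        _ < 1/(k+1) + 1/(k+1) := add_lt_add hn2 hy2
        _ < ε/2 + ε/2 := by push_cast at hk ⊢; exact add_lt_add hk hk
        _ = ε := add_halves ε
  rw [key]
  exact MeasurableSet.iInter fun k => MeasurableSet.iUnion fun n => MeasurableSet.iUnion
    fun _ => measurableSet_lt (hd (u n)) measurable_const

section ProjLemmas
variable {H : Type*} [NormedAddCommGroup H] [InnerProductSpace ℂ H] [CompleteSpace H]

lemma projCLM_eq (K : Submodule ℂ H) (h : IsClosed (K : Set H)) (a : H) :
    haveI : CompleteSpace K := h.completeSpace_coe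
    projCLM K a = (K.orthogonalProjectionOnto a : H) := by
  rw [projCLM, dif_pos h]
  rfl

lemma projCLM_mem (K : Submodule ℂ H) (h : IsClosed (K : Set H)) (a : H) :
    projCLM K a ∈ K := by
  haveI : CompleteSpace K := h.completeSpace_coe
  rw [projCLM_eq K h a]
  exact Submodule.coe_mem _

lemma projCLM_self (K : Submodule ℂ H) (h : IsClosed (K : Set H)) {a : H} (ha : a ∈ K) :
    projCLM K a = a := by
  haveI : CompleteSpace K := h.completeSpace_coe
  rw [projCLM_eq K h a]
  exact K.starProjection_eq_self_iff.mpr ha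

lemma projCLM_norm_le (K : Submodule ℂ H) (h : IsClosed (K : Set H)) (a : H) :
    ‖projCLM K a‖ ≤ ‖a‖ := by
  haveI : CompleteSpace K := h.completeSpace_coe
  rw [projCLM_eq K h a]
  have := Submodule.orthogonalProjectionOnto_norm_le K
  calc ‖(K.orthogonalProjectionOnto a : H)‖ = ‖K.orthogonalProjectionOnto a‖ := rfl
    _ ≤ ‖K.orthogonalProjectionOnto‖ * ‖a‖ := (K.orthogonalProjectionOnto).le_opNorm a
    _ ≤ 1 * ‖a‖ := by gcongr
    _ = ‖a‖ := one_mul _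

lemma projCLM_inner_self (K : Submodule ℂ H) (h : IsClosed (K : Set H)) (a : H) :
    (inner ℂ (projCLM K a) (projCLM K a) : ℂ) = inner ℂ (projCLM K a) a := by
  haveI : CompleteSpace K := h.completeSpace_coe
  have h0 : (inner ℂ (projCLM K a) (a - projCLM K a) : ℂ) = 0 := by
    rw [← inner_conj_symm]
    rw [projCLM_eq K h a]
    rw [show inner ℂ (a - (K.orthogonalProjectionOnto a : H)) (K.orthogonalProjectionOnto a : H) = 0 from
      K.starProjection_inner_eq_zero a _ (Submodule.coe_mem _)]
    simp
  have := inner_sub_right (𝕜 := ℂ) (projCLM K a) a (projCLM K a)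
  rw [h0] at this
  linear_combination this

end ProjLemmas


lemma stronglyMeasurable_projCLM {Ω H : Type*} [MeasurableSpace Ω]
    [NormedAddCommGroup H] [InnerProductSpace ℂ H] [CompleteSpace H]
    [TopologicalSpace.SeparableSpace H]
    (J : Ω → Submodule ℂ H) (hJclosed : ∀ ω, IsClosed ((J ω : Set H)))
    (hJmeas : ∀ a b : H, Measurable fun ω => (inner ℂ (projCLM (J ω) a) b : ℂ)) (a : H) :
    MeasureTheory.StronglyMeasurable fun ω => projCLM (J ω) a := by
  apply stronglyMeasurable_of_measurable_dist
  intro c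
  have hre : ∀ b : H, Measurable fun ω => (inner ℂ (projCLM (J ω) a) b : ℂ).re :=
    fun b => Complex.measurable_re.comp (hJmeas a b)
  have hdist : (fun ω => dist (projCLM (J ω) a) c)
      = fun ω => Real.sqrt ((inner ℂ (projCLM (J ω) a) a : ℂ).re
          - 2 * (inner ℂ (projCLM (J ω) a) c : ℂ).re + ‖c‖ ^ 2) := by
    funext ω
    have h1 : ‖projCLM (J ω) a‖ ^ 2 = (inner ℂ (projCLM (J ω) a) a : ℂ).re := by
      rw [← projCLM_inner_self (J ω) (hJclosed ω) a]
      rw [← inner_self_eq_norm_sq (𝕜 := ℂ)]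
      rfl
    have h2 : dist (projCLM (J ω) a) c ^ 2
        = (inner ℂ (projCLM (J ω) a) a : ℂ).re
          - 2 * (inner ℂ (projCLM (J ω) a) c : ℂ).re + ‖c‖ ^ 2 := by
      rw [dist_eq_norm, ← h1]
      have := @norm_sub_sq ℂ H _ _ _ (projCLM (J ω) a) c
      simpa using this
    rw [← h2, Real.sqrt_sq dist_nonneg]
  rw [hdist]
  apply Measurable.comp Real.continuous_sqrt.measurable
  exact ((hre a).sub ((hre c).const_mul 2)).add measurable_const

/-- **Theorem 2.2, uniqueness of the range operator.** Let `J` be a measurable range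
function with corresponding closed subspace `W ⊆ L²(Ω, H)`. If `R₁`, `R₂` are measurable
range operators on `J` and `U : W → L²(Ω, H)` is a bounded linear operator satisfying
`(Uφ)(ω) = R₁(ω)(φ(ω))` a.e. and `(Uφ)(ω) = R₂(ω)(φ(ω))` a.e. for every `φ ∈ W`, then
`R₁(ω)` and `R₂(ω)` agree on `J(ω)` for a.e. `ω`. -/
theorem translation_preserving_stmt3
    {Ω H : Type*} [MeasurableSpace Ω] (μ : Measure Ω) [SigmaFinite μ]
    [NormedAddCommGroup H] [InnerProductSpace ℂ H] [CompleteSpace H]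
    [TopologicalSpace.SeparableSpace H]
    [TopologicalSpace.SeparableSpace (Lp ℂ 2 μ)]
    -- `J` is a measurable range function:
    (J : Ω → Submodule ℂ H)
    (hJclosed : ∀ ω, IsClosed ((J ω : Set H)))
    (hJmeas : ∀ a b : H, Measurable fun ω => (inner ℂ (projCLM (J ω) a) b : ℂ))
    -- `R₁`, `R₂` are measurable range operators on `J`:
    (R₁ R₂ : Ω → H →L[ℂ] H)
    (hR₁ : ∀ᵐ ω ∂μ, ∀ a : H, R₁ ω a = R₁ ω (projCLM (J ω) a))
    (hR₁meas : ∀ a b : H, Measurable fun ω => (inner ℂ (R₁ ω (projCLM (J ω) a)) b : ℂ))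
    (hR₂ : ∀ᵐ ω ∂μ, ∀ a : H, R₂ ω a = R₂ ω (projCLM (J ω) a))
    (hR₂meas : ∀ a b : H, Measurable fun ω => (inner ℂ (R₂ ω (projCLM (J ω) a)) b : ℂ))
    -- `U` is a bounded linear operator on the subspace `W` corresponding to `J`:
    (U : rangeSubmodule μ J →L[ℂ] Lp H 2 μ)
    (hUR₁ : ∀ φ : rangeSubmodule μ J,
      ∀ᵐ ω ∂μ, (U φ : Lp H 2 μ) ω = R₁ ω ((φ : Lp H 2 μ) ω))
    (hUR₂ : ∀ φ : rangeSubmodule μ J,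
      ∀ᵐ ω ∂μ, (U φ : Lp H 2 μ) ω = R₂ ω ((φ : Lp H 2 μ) ω)) :
    -- then `R₁(ω) a = R₂(ω) a` for all `a ∈ J(ω)`, for a.e. `ω`:
    ∀ᵐ ω ∂μ, ∀ a ∈ J ω, R₁ ω a = R₂ ω a := by
  classical
  -- Pointwise facts about the projections
  have hPmem : ∀ ω (a : H), projCLM (J ω) a ∈ J ω := fun ω a =>
    projCLM_mem (J ω) (hJclosed ω) a
  -- Step 1: for each fixed `a`, a.e. `R₁ ω (P ω a) = R₂ ω (P ω a)`.
  have key : ∀ a : H, ∀ᵐ ω ∂μ, R₁ ω (projCLM (J ω) a) = R₂ ω (projCLM (J ω) a) := by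
    intro a
    have hae : ∀ n : ℕ, ∀ᵐ ω ∂μ, ω ∈ spanningSets μ n →
        R₁ ω (projCLM (J ω) a) = R₂ ω (projCLM (J ω) a) := by
      intro n
      set E := spanningSets μ n with hE
      have hEmeas : MeasurableSet E := measurableSet_spanningSets μ n
      set f : Ω → H := E.indicator (fun ω => projCLM (J ω) a) with hf
      have hsm : MeasureTheory.StronglyMeasurable f :=
        (stronglyMeasurable_projCLM J hJclosed hJmeas a).indicator hEmeas
      have hbd : MemLp f 2 μ := by
        have hg : MemLp (E.indicator fun _ => a) 2 μ :=
          memLp_indicator_const 2 hEmeas a (Or.inr (measure_spanningSets_lt_top μ n).ne)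
        refine hg.of_le hsm.aestronglyMeasurable (Filter.Eventually.of_forall fun ω => ?_)
        by_cases hω : ω ∈ E
        · simp only [hf, Set.indicator_of_mem hω]
          exact projCLM_norm_le (J ω) (hJclosed ω) a
        · simp [hf, Set.indicator_of_notMem hω]
      set φ : Lp H 2 μ := hbd.toLp f with hφ
      have hφmem : φ ∈ rangeSubmodule μ J := by
        show ∀ᵐ ω ∂μ, (φ : Ω → H) ω ∈ J ω
        filter_upwards [hbd.coeFn_toLp] with ω hω
        rw [hω]
        by_cases hωE : ω ∈ E
        · simpa [hf, Set.indicator_of_mem hωE] using hPmem ω a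
        · simp only [hf, Set.indicator_of_notMem hωE]
          exact (J ω).zero_mem
      have e1 := hUR₁ ⟨φ, hφmem⟩
      have e2 := hUR₂ ⟨φ, hφmem⟩
      filter_upwards [e1, e2, hbd.coeFn_toLp] with ω h1 h2 h3 hωE
      have h3' : (φ : Ω → H) ω = f ω := h3
      rw [h3'] at h1 h2
      have : R₁ ω (f ω) = R₂ ω (f ω) := h1.symm.trans h2
      simpa [hf, Set.indicator_of_mem hωE] using this
    have hall := ae_all_iff.mpr hae
    filter_upwards [hall] with ω hω
    have : ω ∈ ⋃ n, spanningSets μ n := by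
      rw [iUnion_spanningSets]; trivial
    obtain ⟨n, hn⟩ := Set.mem_iUnion.mp this
    exact hω n hn
  -- Step 2: combine over a countable dense set of `a`s.
  obtain ⟨u, hu⟩ := TopologicalSpace.exists_dense_seq H
  have keyu : ∀ᵐ ω ∂μ, ∀ n : ℕ,
      R₁ ω (projCLM (J ω) (u n)) = R₂ ω (projCLM (J ω) (u n)) :=
    ae_all_iff.mpr fun n => key (u n)
  filter_upwards [keyu] with ω hω a ha
  have hcont : ∀ x : H, R₁ ω (projCLM (J ω) x) = R₂ ω (projCLM (J ω) x) := by
    have heq : (fun x : H => R₁ ω (projCLM (J ω) x))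
        = fun x : H => R₂ ω (projCLM (J ω) x) := by
      apply Continuous.ext_on hu
      · exact (R₁ ω).continuous.comp (projCLM (J ω)).continuous
      · exact (R₂ ω).continuous.comp (projCLM (J ω)).continuous
      · rintro _ ⟨n, rfl⟩
        exact hω n
    exact fun x => congrFun heq x
  have hPa : projCLM (J ω) a = a := projCLM_self (J ω) (hJclosed ω) ha
  calc R₁ ω a = R₁ ω (projCLM (J ω) a) := by rw [hPa]
    _ = R₂ ω (projCLM (J ω) a) := hcont a
    _ = R₂ ω a := by rw [hPa]
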